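/- In the category FinAttr(V,U), let ⟨σ, id_A⟩ : ⟨G,A,g⟩ → ⟨F,A,f⟩ and ⟨τ, id_A⟩ : ⟨H,A,h⟩ → ⟨F,A,f⟩ be neutral morphisms, and let ⟨E, σ', τ'⟩ be a pullback over ⟨σ, τ⟩ in 𝓕. Then ⟨⟨E,A,e⟩, ⟨σ',id_A⟩, ⟨τ',id_A⟩⟩ is a pullback over the two given morphisms in FinAttr(V,U), where e(x) = g(Eτ'(x)) ∩ h(Eσ'(x)) for all x ∈ EE. -/

import Mathlib

open CategoryTheory

universe v₁ u₁ v₂ u₂ u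

variable {𝓕 : Type u₁} [Category.{v₁} 𝓕] {𝓐 : Type u₂} [Category.{v₂} 𝓐]

/-- A finitely attributed structure `⟨F, A, f⟩`. -/
structure FinAttrObj (V : 𝓕 ⥤ FintypeCat.{u}) (U : 𝓐 ⥤ Type u) where
  F : 𝓕
  A : 𝓐
  attr : ↑(V.obj F) → {s : Set (U.obj A) // s.Finite}

/-- A morphism `⟨σ, α⟩` of finitely attributed structures. -/
@[ext]
structure FinAttrHom {V : 𝓕 ⥤ FintypeCat.{u}} {U : 𝓐 ⥤ Type u}
    (X Y : FinAttrObj V U) where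
  σ : X.F ⟶ Y.F
  α : X.A ⟶ Y.A
  cond : ∀ x : ↑(V.obj X.F),
    (U.map α) '' (X.attr x).1 ⊆ (Y.attr (V.map σ x)).1

/-- The category FinAttr(V,U) of finitely attributed structures. -/
instance FinAttr.category (V : 𝓕 ⥤ FintypeCat.{u}) (U : 𝓐 ⥤ Type u) :
    Category.{max v₁ v₂} (FinAttrObj V U) where
  Hom X Y := FinAttrHom X Y
  id X := ⟨𝟙 X.F, 𝟙 X.A, by simp⟩
  comp {X Y Z} φ ψ :=
    ⟨φ.σ ≫ ψ.σ, φ.α ≫ ψ.α, by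
      intro x
      rw [U.map_comp, V.map_comp]
      calc (U.map ψ.α ∘ U.map φ.α) '' (X.attr x).1
          = U.map ψ.α '' (U.map φ.α '' (X.attr x).1) := by
            rw [Set.image_comp]
        _ ⊆ U.map ψ.α '' (Y.attr (V.map φ.σ x)).1 :=
            Set.image_mono (φ.cond x)
        _ ⊆ (Z.attr (V.map ψ.σ (V.map φ.σ x))).1 := ψ.cond _
        _ = (Z.attr ((V.map φ.σ ≫ V.map ψ.σ) x)).1 := rfl⟩
  id_comp φ := by apply FinAttrHom.ext <;> simp
  comp_id φ := by apply FinAttrHom.ext <;> simp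
  assoc φ ψ χ := by apply FinAttrHom.ext <;> simp

/-! A cone over a square in FinAttr(V,U) has only one candidate lift: the pair formed by the
lifts of its 𝓕- and 𝓐-components. So a square whose component squares are pullbacks is a
pullback once that pair satisfies the label condition, i.e. once every attribute of the corner
that is compatible with both legs is already present there.
For neutral morphisms the 𝓐-square consists of identities, and an attribute landing in both
`g (Eτ' x)` and `h (Eσ' x)` lies in their intersection `e x`. -/

open Limits

namespace FinAttr

variable {V : 𝓕 ⥤ FintypeCat.{u}} {U : 𝓐 ⥤ Type u}

@[ext]
lemma hom_ext {X Y : FinAttrObj V U} {φ ψ : X ⟶ Y} (hσ : φ.σ = ψ.σ) (hα : φ.α = ψ.α) :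
    φ = ψ :=
  FinAttrHom.ext hσ hα

@[simp]
lemma comp_σ {X Y Z : FinAttrObj V U} (φ : X ⟶ Y) (ψ : Y ⟶ Z) : (φ ≫ ψ).σ = φ.σ ≫ ψ.σ :=
  rfl

@[simp]
lemma comp_α {X Y Z : FinAttrObj V U} (φ : X ⟶ Y) (ψ : Y ⟶ Z) : (φ ≫ ψ).α = φ.α ≫ ψ.α :=
  rfl

theorem isPullback_of_isPullback_components {P X Y Z : FinAttrObj V U} {fst : P ⟶ X}
    {snd : P ⟶ Y} {f : X ⟶ Z} {g : Y ⟶ Z} (hσ : IsPullback fst.σ snd.σ f.σ g.σ)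
    (hα : IsPullback fst.α snd.α f.α g.α)
    (hattr : ∀ x a, U.map fst.α a ∈ (X.attr (V.map fst.σ x)).1 →
      U.map snd.α a ∈ (Y.attr (V.map snd.σ x)).1 → a ∈ (P.attr x).1) :
    IsPullback fst snd f g := by
  refine IsPullback.of_isLimit' ⟨hom_ext hσ.w hα.w⟩ (PullbackCone.IsLimit.mk _ ?_ ?_ ?_ ?_)
  · intro s
    refine ⟨hσ.lift s.fst.σ s.snd.σ (congrArg FinAttrHom.σ s.condition),
      hα.lift s.fst.α s.snd.α (congrArg FinAttrHom.α s.condition), ?_⟩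
    rintro w _ ⟨a, ha, rfl⟩
    apply hattr
    · rw [← Functor.map_comp_apply, ← Functor.map_comp_apply, hα.lift_fst, hσ.lift_fst]
      exact s.fst.cond w ⟨a, ha, rfl⟩
    · rw [← Functor.map_comp_apply, ← Functor.map_comp_apply, hα.lift_snd, hσ.lift_snd]
      exact s.snd.cond w ⟨a, ha, rfl⟩
  · intro s
    exact hom_ext (hσ.lift_fst _ _ _) (hα.lift_fst _ _ _)
  · intro s
    exact hom_ext (hσ.lift_snd _ _ _) (hα.lift_snd _ _ _)
  · intro s m hm₁ hm₂
    exact hom_ext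
      (hσ.hom_ext (by simp [← hm₁]) (by simp [← hm₂]))
      (hα.hom_ext (by simp [← hm₁]) (by simp [← hm₂]))

end FinAttr

/-- Lemma 5 of the paper: pullbacks of neutral morphisms in FinAttr(V,U).
If `⟨σ, id_A⟩ : ⟨G,A,g⟩ → ⟨F,A,f⟩` and `⟨τ, id_A⟩ : ⟨H,A,h⟩ → ⟨F,A,f⟩` are neutral
morphisms and `⟨E, σ', τ'⟩` is a pullback over `⟨σ, τ⟩` in `𝓕`, then
`⟨⟨E,A,e⟩, ⟨σ',id_A⟩, ⟨τ',id_A⟩⟩` is a pullback in FinAttr(V,U), where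
`e(x) = g(Eτ'(x)) ∩ h(Eσ'(x))`. -/
theorem finAttr_pullback (V : 𝓕 ⥤ FintypeCat.{u}) (U : 𝓐 ⥤ Type u)
    {F G H E : 𝓕} {A : 𝓐}
    (f : ↑(V.obj F) → {s : Set (U.obj A) // s.Finite})
    (g : ↑(V.obj G) → {s : Set (U.obj A) // s.Finite})
    (h : ↑(V.obj H) → {s : Set (U.obj A) // s.Finite})
    (σ : G ⟶ F) (τ : H ⟶ F) (τ' : E ⟶ G) (σ' : E ⟶ H)
    (hpb : IsPullback τ' σ' σ τ)
    (cσ : ∀ x, (U.map (𝟙 A)) '' (g x).1 ⊆ (f (V.map σ x)).1)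
    (cτ : ∀ x, (U.map (𝟙 A)) '' (h x).1 ⊆ (f (V.map τ x)).1) :
    ∃ (c₁ : ∀ x : ↑(V.obj E), (U.map (𝟙 A)) ''
        ((g (V.map τ' x)).1 ∩ (h (V.map σ' x)).1) ⊆ (g (V.map τ' x)).1)
      (c₂ : ∀ x : ↑(V.obj E), (U.map (𝟙 A)) ''
        ((g (V.map τ' x)).1 ∩ (h (V.map σ' x)).1) ⊆ (h (V.map σ' x)).1),
      IsPullback
        (show FinAttrObj.mk E A
            (fun x => ⟨(g (V.map τ' x)).1 ∩ (h (V.map σ' x)).1,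
              (g (V.map τ' x)).2.inter_of_left _⟩) ⟶ FinAttrObj.mk G A g
          from ⟨τ', 𝟙 A, c₁⟩)
        (show FinAttrObj.mk E A
            (fun x => ⟨(g (V.map τ' x)).1 ∩ (h (V.map σ' x)).1,
              (g (V.map τ' x)).2.inter_of_left _⟩) ⟶ FinAttrObj.mk H A h
          from ⟨σ', 𝟙 A, c₂⟩)
        (show FinAttrObj.mk G A g ⟶ FinAttrObj.mk F A f from ⟨σ, 𝟙 A, cσ⟩)
        (show FinAttrObj.mk H A h ⟶ FinAttrObj.mk F A f from ⟨τ, 𝟙 A, cτ⟩) := by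
  refine ⟨fun _ => by simp, fun _ => by simp, ?_⟩
  refine FinAttr.isPullback_of_isPullback_components hpb IsPullback.of_id_fst ?_
  exact fun _ _ hg hh => ⟨by simpa using hg, by simpa using hh⟩
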